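/- arXiv:1212.1912 — 5 statements merged into one kernel-verified Lean document; each statement's English description precedes it below -/
import Mathlib

section
/- Let t ≥ 2 and suppose p, q > 0 satisfy: p + q ≥ 1 when t = 2; p ≥ 1 and q ≥ 1 when t > 2; and p^{1/(3−t)} + q^{1/(3−t)} ≤ 1 when t > 3. Then for all nonnegative reals α and β, (α + β)^{t−2} ≤ p·α^{t−2} + q·β^{t−2}. -/
open Real

private lemma real_rpow_add_le_add_rpow {s x y : ℝ} (hs : 0 ≤ s) (hs1 : s ≤ 1)
    (hx : 0 ≤ x) (hy : 0 ≤ y) : (x + y) ^ s ≤ x ^ s + y ^ s := by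
  have := NNReal.rpow_add_le_add_rpow x.toNNReal y.toNNReal hs hs1
  have h := (NNReal.coe_le_coe).2 this
  simpa [NNReal.coe_rpow, Real.coe_toNNReal x hx, Real.coe_toNNReal y hy,
    Real.toNNReal_add hx hy] using h

private lemma real_mean2 {w₁ w₂ z₁ z₂ s : ℝ} (hw₁ : 0 ≤ w₁) (hw₂ : 0 ≤ w₂)
    (hz₁ : 0 ≤ z₁) (hz₂ : 0 ≤ z₂) (hw : w₁ + w₂ = 1) (hs : 1 ≤ s) :
    (w₁ * z₁ + w₂ * z₂) ^ s ≤ w₁ * z₁ ^ s + w₂ * z₂ ^ s := by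
  have hw' : w₁.toNNReal + w₂.toNNReal = 1 := by
    have := Real.toNNReal_add hw₁ hw₂
    rw [hw] at this; simpa using this.symm
  have := NNReal.rpow_arith_mean_le_arith_mean2_rpow w₁.toNNReal w₂.toNNReal
    z₁.toNNReal z₂.toNNReal hw' hs
  have h := (NNReal.coe_le_coe).2 this
  simpa [NNReal.coe_rpow, Real.coe_toNNReal _ hw₁, Real.coe_toNNReal _ hw₂,
    Real.coe_toNNReal _ hz₁, Real.coe_toNNReal _ hz₂,
    mul_nonneg hw₁ hz₁, mul_nonneg hw₂ hz₂] using h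

private lemma wcalc {w x s : ℝ} (hw : 0 < w) (hx : 0 ≤ x) :
    w * (x / w) ^ s = w ^ (1 - s) * x ^ s := by
  rw [Real.div_rpow hx hw.le, Real.rpow_sub hw, Real.rpow_one]
  have hws : w ^ s ≠ 0 := (Real.rpow_pos_of_pos hw s).ne'
  field_simp

private lemma pow_inv_cancel {p u : ℝ} (hp : 0 < p) (hu : u ≠ 0) :
    (p ^ (1 / u)) ^ u = p := by
  rw [← Real.rpow_mul hp.le, one_div, inv_mul_cancel₀ hu, Real.rpow_one]

theorem split_power_ineq (t p q : ℝ) (ht : 2 ≤ t) (hp : 0 < p) (hq : 0 < q)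
    (h2 : t = 2 → 1 ≤ p + q)
    (hgt2 : 2 < t → 1 ≤ p ∧ 1 ≤ q)
    (hgt3 : 3 < t → p ^ (1 / (3 - t)) + q ^ (1 / (3 - t)) ≤ 1) :
    ∀ α β : ℝ, 0 ≤ α → 0 ≤ β →
      (α + β) ^ (t - 2) ≤ p * α ^ (t - 2) + q * β ^ (t - 2) := by
  intro α β hα hβ
  rcases eq_or_lt_of_le ht with h | h
  · -- t = 2
    simp only [← h]
    norm_num
    exact h2 h.symm
  rcases le_or_gt t 3 with h3 | h3
  · -- 2 < t ≤ 3
    obtain ⟨hp1, hq1⟩ := hgt2 h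
    have hs : 0 ≤ t - 2 := by linarith
    have hs1 : t - 2 ≤ 1 := by linarith
    have hsum := real_rpow_add_le_add_rpow hs hs1 hα hβ
    have h1 : α ^ (t - 2) ≤ p * α ^ (t - 2) :=
      le_mul_of_one_le_left (Real.rpow_nonneg hα _) hp1
    have h2' : β ^ (t - 2) ≤ q * β ^ (t - 2) :=
      le_mul_of_one_le_left (Real.rpow_nonneg hβ _) hq1
    linarith
  · -- t > 3
    set s := t - 2 with hsdef
    have hs1 : 1 ≤ s := by rw [hsdef]; linarith
    set a := p ^ (1 / (3 - t)) with ha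
    set b := q ^ (1 / (3 - t)) with hb
    have hab : a + b ≤ 1 := hgt3 h3
    have ha0 : 0 < a := Real.rpow_pos_of_pos hp _
    have hb0 : 0 < b := Real.rpow_pos_of_pos hq _
    have hσ : 0 < a + b := by linarith
    set w₁ := a / (a + b) with hw1
    set w₂ := b / (a + b) with hw2
    have hw₁0 : 0 < w₁ := div_pos ha0 hσ
    have hw₂0 : 0 < w₂ := div_pos hb0 hσ
    have hwsum : w₁ + w₂ = 1 := by rw [hw1, hw2]; field_simp
    have key := real_mean2 hw₁0.le hw₂0.le (div_nonneg hα hw₁0.le)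
      (div_nonneg hβ hw₂0.le) hwsum hs1
    rw [mul_div_cancel₀ _ hw₁0.ne', mul_div_cancel₀ _ hw₂0.ne'] at key
    rw [wcalc hw₁0 hα, wcalc hw₂0 hβ] at key
    have hne : (3 : ℝ) - t ≠ 0 := by intro hc; linarith
    have h1s : (1 : ℝ) - s = 3 - t := by rw [hsdef]; ring
    have hap : a ^ (1 - s) = p := by rw [ha, h1s]; exact pow_inv_cancel hp hne
    have hbq : b ^ (1 - s) = q := by rw [hb, h1s]; exact pow_inv_cancel hq hne
    have hw1a : a ≤ w₁ := by
      rw [hw1, le_div_iff₀ hσ]; nlinarith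
    have hw2b : b ≤ w₂ := by
      rw [hw2, le_div_iff₀ hσ]; nlinarith
    have hm1 : w₁ ^ (1 - s) ≤ a ^ (1 - s) :=
      Real.rpow_le_rpow_of_nonpos ha0 hw1a (by linarith)
    have hm2 : w₂ ^ (1 - s) ≤ b ^ (1 - s) :=
      Real.rpow_le_rpow_of_nonpos hb0 hw2b (by linarith)
    have hfin : w₁ ^ (1 - s) * α ^ s + w₂ ^ (1 - s) * β ^ s ≤ p * α ^ s + q * β ^ s := by
      rw [← hap, ← hbq]
      exact add_le_add (mul_le_mul_of_nonneg_right hm1 (Real.rpow_nonneg hα _))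
        (mul_le_mul_of_nonneg_right hm2 (Real.rpow_nonneg hβ _))
    linarith
end

section
/- For real x and y and real t with 2 ≤ t ≤ 3, one has |x+y|^t − |x|^t ≤ t·|x|^{t−2}·x·y + (t(t−1)/2)·|x|^{t−2}·y² + |y|^t. -/
/-!
Write `g u = |u| ^ (t - 2) * u`, so that `u ↦ |u| ^ t` has derivative `t * g` and `g` has
derivative `(t - 1) * |u| ^ (t - 2)`. As `0 ≤ t - 2 ≤ 1`, the power `w ↦ w ^ (t - 2)` is
subadditive on `[0, ∞)`, which bounds the increment of `g` from `a` to `b ≥ a` by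
`(t - 1) * |a| ^ (t - 2) * (b - a) + (b - a) ^ (t - 1)`. Comparing derivatives along `[x, x + y]`
then gives the inequality for `y ≥ 0`, and the case `y < 0` follows from the symmetry
`(x, y) ↦ (-x, -y)`.
-/

open Real Set Filter Topology Asymptotics

theorem image_le_image_of_hasDerivAt_nonneg {f f' : ℝ → ℝ} {a b : ℝ} (hab : a ≤ b)
    (hf : ∀ x, HasDerivAt f (f' x) x) (hf' : ∀ x ∈ Ioo a b, 0 ≤ f' x) : f a ≤ f b :=
  monotoneOn_of_hasDerivWithinAt_nonneg (convex_Icc a b)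
    (fun x _ => (hf x).continuousAt.continuousWithinAt) (fun x _ => (hf x).hasDerivWithinAt)
    (by rwa [interior_Icc]) (left_mem_Icc.2 hab) (right_mem_Icc.2 hab) hab

theorem hasDerivAt_abs_rpow_mul_self {p : ℝ} (hp : 0 ≤ p) (u : ℝ) :
    HasDerivAt (fun u => |u| ^ p * u) ((p + 1) * |u| ^ p) u := by
  rcases hp.eq_or_lt with rfl | hp
  · simpa using hasDerivAt_id' u
  rcases eq_or_ne u 0 with rfl | hu
  · rw [hasDerivAt_iff_isLittleO_nhds_zero]
    have hlim : Tendsto (fun h : ℝ => |h| ^ p) (𝓝 0) (𝓝 0) := by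
      simpa [hp.ne'] using (continuous_abs.tendsto (0 : ℝ)).rpow_const (Or.inr hp.le)
    simpa [abs_zero, zero_rpow hp.ne'] using
      ((isLittleO_one_iff ℝ).2 hlim).mul_isBigO (isBigO_refl (fun h : ℝ => h) (𝓝 0))
  · refine (((hasDerivAt_abs hu).rpow_const (p := p) (Or.inl (abs_ne_zero.2 hu))).mul
      (hasDerivAt_id' u)).congr_deriv ?_
    rw [rpow_sub_one (abs_ne_zero.2 hu)]
    field_simp
    rw [mul_right_comm, sign_mul_self]
    ring

theorem abs_rpow_mul_self_sub_le {p : ℝ} (hp₀ : 0 ≤ p) (hp₁ : p ≤ 1) {a b : ℝ}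
    (hab : a ≤ b) :
    |b| ^ p * b - |a| ^ p * a ≤ (p + 1) * |a| ^ p * (b - a) + (b - a) ^ (p + 1) := by
  have hgap : ∀ v, HasDerivAt (fun v => (v - a) ^ (p + 1)) ((p + 1) * (v - a) ^ p) v :=
    fun v => by
      simpa using ((hasDerivAt_id' v).sub_const a).rpow_const (p := p + 1) (Or.inr (by linarith))
  have hcompare := image_le_image_of_hasDerivAt_nonneg hab
    (f := fun v => (p + 1) * |a| ^ p * (v - a) + (v - a) ^ (p + 1) - (|v| ^ p * v - |a| ^ p * a))
    (fun v => ((((hasDerivAt_id' v).sub_const a).const_mul _).add (hgap v)).sub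
      ((hasDerivAt_abs_rpow_mul_self hp₀ v).sub_const _)) ?_
  · simpa [zero_rpow (by linarith : p + 1 ≠ 0)] using hcompare
  intro v hv
  have hva : 0 ≤ v - a := by linarith [hv.1]
  have hsubadd : |v| ^ p ≤ |a| ^ p + (v - a) ^ p :=
    calc |v| ^ p ≤ (|a| + (v - a)) ^ p := by
          gcongr
          simpa [abs_of_nonneg hva] using abs_add_le a (v - a)
      _ ≤ |a| ^ p + (v - a) ^ p := rpow_add_le_add_rpow (abs_nonneg a) hva hp₀ hp₁
  linarith [mul_le_mul_of_nonneg_left hsubadd (by linarith : (0:ℝ) ≤ p + 1)]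

theorem abs_add_rpow_sub_abs_rpow_le_of_nonneg {t : ℝ} (ht₂ : 2 ≤ t) (ht₃ : t ≤ 3)
    (x : ℝ) {y : ℝ} (hy : 0 ≤ y) :
    |x + y| ^ t - |x| ^ t ≤
      t * |x| ^ (t - 2) * x * y + t * (t - 1) / 2 * |x| ^ (t - 2) * y ^ 2 + |y| ^ t := by
  have hshift : ∀ z, HasDerivAt (fun z => |x + z| ^ t) (t * |x + z| ^ (t - 2) * (x + z)) z :=
    fun z => ((hasDerivAt_abs_rpow (x + z) (by linarith)).comp z
      ((hasDerivAt_id' z).const_add x)).congr_deriv (mul_one _)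
  have hcompare := image_le_image_of_hasDerivAt_nonneg hy
    (f := fun z => t * |x| ^ (t - 2) * x * z + t * (t - 1) / 2 * |x| ^ (t - 2) * z ^ 2 + z ^ t
      - (|x + z| ^ t - |x| ^ t))
    (fun z => (((((hasDerivAt_id' z).const_mul _).add ((hasDerivAt_pow 2 z).const_mul _)).add
      ((hasDerivAt_id' z).rpow_const (p := t) (Or.inr (by linarith)))).sub
      ((hshift z).sub_const _))) ?_
  · simpa [zero_rpow (by linarith : t ≠ 0), abs_of_nonneg hy] using hcompare
  intro z hz
  have hinc := abs_rpow_mul_self_sub_le (p := t - 2) (by linarith) (by linarith)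
    (le_add_of_nonneg_right hz.1.le : x ≤ x + z)
  rw [add_sub_cancel_left, show t - 2 + 1 = t - 1 by ring] at hinc
  rw [Nat.add_one_sub_one, pow_one]
  linarith [mul_le_mul_of_nonneg_left hinc (by linarith : (0:ℝ) ≤ t)]

theorem scalar_lemma1 (t : ℝ) (ht : t ∈ Set.Icc (2 : ℝ) 3) (x y : ℝ) :
    |x + y| ^ t - |x| ^ t ≤
      t * |x| ^ (t - 2) * x * y + t * (t - 1) / 2 * |x| ^ (t - 2) * y ^ 2 + |y| ^ t := by
  rcases le_total 0 y with hy | hy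
  · exact abs_add_rpow_sub_abs_rpow_le_of_nonneg ht.1 ht.2 x hy
  · have h := abs_add_rpow_sub_abs_rpow_le_of_nonneg ht.1 ht.2 (-x) (neg_nonneg.2 hy)
    simp only [← neg_add, abs_neg, neg_sq, mul_neg] at h
    linarith
end

section
/- Let X₁, …, X_n be independent real-valued random variables with E X_i = 0, E X_i² ≤ b_i² and E|X_i|³ < ∞. Let S_n = X₁ + … + X_n and B_n² = ∑ b_i². Then E|S_n|³ ≤ ∑_{i=1}^n E|X_i|³ + 2·B_n³. -/
open MeasureTheory ProbabilityTheory

/-!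
Induction on the number of summands. For a partial sum `S` and the next summand `Y`, independent
of `S` and centered, take expectations in the elementary bound
`|S + Y|³ ≤ |S|³ + 3 S|S| Y + 3 |S| Y² + |Y|³`: the odd term vanishes because
`E[S|S| Y] = E[S|S|] E[Y] = 0`, and `E[|S| Y²] = E|S| E[Y²]`. With `a = √(E S²) ≥ E|S|` and
`c = √(E (S + Y)²) = √(a² + E Y²)`, the new term `3 a (c² - a²)` is absorbed by the growth of
the variance part, since `2c³ - 2a³ - 3a(c² - a²) = (c - a)²(2c + a) ≥ 0`.
-/

theorem abs_add_pow_three_le (x y : ℝ) :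
    |x + y| ^ 3 ≤ |x| ^ 3 + 3 * (x * |x| * y) + 3 * (|x| * y ^ 2) + |y| ^ 3 := by
  rcases abs_cases (x + y) with ⟨h1, h1'⟩ | ⟨h1, h1'⟩ <;>
  rcases abs_cases x with ⟨h2, h2'⟩ | ⟨h2, h2'⟩ <;>
  rcases abs_cases y with ⟨h3, h3'⟩ | ⟨h3, h3'⟩ <;>
  rw [h1, h2, h3] <;>
  nlinarith [sq_nonneg (x + y), sq_nonneg (x - y), sq_nonneg x, sq_nonneg y]

theorem two_mul_sqrt_pow_three_add_le {A B : ℝ} (hA : 0 ≤ A) (hB : 0 ≤ B) :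
    2 * √A ^ 3 + 3 * √A * B ≤ 2 * √(A + B) ^ 3 := by
  obtain ⟨a, ha, rfl⟩ : ∃ a, 0 ≤ a ∧ A = a ^ 2 := ⟨√A, by positivity, (Real.sq_sqrt hA).symm⟩
  obtain ⟨c, hc, hac, rfl⟩ : ∃ c, 0 ≤ c ∧ a ≤ c ∧ B = c ^ 2 - a ^ 2 :=
    ⟨√(a ^ 2 + B), by positivity, Real.le_sqrt_of_sq_le (by linarith),
      by rw [Real.sq_sqrt (by positivity)]; ring⟩
  rw [add_sub_cancel, Real.sqrt_sq ha, Real.sqrt_sq hc]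
  nlinarith [mul_nonneg (sq_nonneg (c - a)) (by positivity : 0 ≤ 2 * c + a)]

theorem memLp_nat_iff_integrable_abs_pow {Ω : Type*} [MeasurableSpace Ω] {μ : Measure Ω}
    {f : Ω → ℝ} (hf : AEStronglyMeasurable f μ) {p : ℕ} (hp : p ≠ 0) :
    MemLp f p μ ↔ Integrable (fun ω ↦ |f ω| ^ p) μ := by
  rw [← integrable_norm_rpow_iff hf (by exact_mod_cast hp) (ENNReal.natCast_ne_top p)]
  simp

theorem integral_abs_le_sqrt_integral_sq {Ω : Type*} [MeasurableSpace Ω] {μ : Measure Ω}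
    [IsProbabilityMeasure μ] {f : Ω → ℝ} (hf : MemLp f 2 μ) :
    ∫ ω, |f ω| ∂μ ≤ √(∫ ω, f ω ^ 2 ∂μ) := by
  have h := variance_nonneg |f| μ
  rw [variance_eq_sub hf.abs] at h
  refine Real.le_sqrt_of_sq_le ?_
  simpa using h

namespace ProbabilityTheory

variable {Ω ι : Type*} [MeasurableSpace Ω] {μ : Measure Ω} {X : ι → Ω → ℝ}

theorem iIndepFun.indepFun_fun_finsetSum_of_notMem (hindep : iIndepFun X μ)
    (hmeas : ∀ i, Measurable (X i)) {s : Finset ι} {j : ι} (hj : j ∉ s) :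
    IndepFun (fun ω ↦ ∑ i ∈ s, X i ω) (X j) μ := by
  simpa only [Finset.sum_fn] using hindep.indepFun_finsetSum_of_notMem hmeas hj

variable [IsProbabilityMeasure μ]

theorem integral_add_sq_of_indepFun {S Y : Ω → ℝ} (hSY : IndepFun S Y μ) (hS : MemLp S 2 μ)
    (hY : MemLp Y 2 μ) (hYmean : ∫ ω, Y ω ∂μ = 0) :
    ∫ ω, (S ω + Y ω) ^ 2 ∂μ = ∫ ω, S ω ^ 2 ∂μ + ∫ ω, Y ω ^ 2 ∂μ := by
  have hSY_int : Integrable (fun ω ↦ S ω * Y ω) μ :=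
    hSY.integrable_mul (hS.integrable one_le_two) (hY.integrable one_le_two)
  have hcross : ∫ ω, S ω * Y ω ∂μ = 0 := by
    rw [hSY.integral_fun_mul_eq_mul_integral hS.aestronglyMeasurable hY.aestronglyMeasurable,
      hYmean, mul_zero]
  simp_rw [add_sq, mul_assoc]
  rw [integral_add (hS.integrable_sq.fun_add (hSY_int.const_mul 2)) hY.integrable_sq,
    integral_add hS.integrable_sq (hSY_int.const_mul 2), integral_const_mul, hcross]
  ring

theorem integral_abs_add_pow_three_le_of_indepFun {S Y : Ω → ℝ} (hSY : IndepFun S Y μ)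
    (hS : MemLp S 3 μ) (hY : MemLp Y 3 μ) (hYmean : ∫ ω, Y ω ∂μ = 0) :
    ∫ ω, |S ω + Y ω| ^ 3 ∂μ ≤
      ∫ ω, |S ω| ^ 3 ∂μ + 3 * (∫ ω, |S ω| ∂μ) * (∫ ω, Y ω ^ 2 ∂μ) + ∫ ω, |Y ω| ^ 3 ∂μ := by
  have hS2 : MemLp S 2 μ := hS.mono_exponent (by norm_num)
  have hY2 : MemLp Y 2 μ := hY.mono_exponent (by norm_num)
  have hSabs : Integrable (fun ω ↦ |S ω|) μ := (hS.integrable (by norm_num)).abs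
  have hS3 : Integrable (fun ω ↦ |S ω| ^ 3) μ :=
    (memLp_nat_iff_integrable_abs_pow hS.aestronglyMeasurable three_ne_zero).1 hS
  have hY3 : Integrable (fun ω ↦ |Y ω| ^ 3) μ :=
    (memLp_nat_iff_integrable_abs_pow hY.aestronglyMeasurable three_ne_zero).1 hY
  have hSY3 : Integrable (fun ω ↦ |S ω + Y ω| ^ 3) μ :=
    (memLp_nat_iff_integrable_abs_pow (hS.add hY).aestronglyMeasurable three_ne_zero).1
      (hS.add hY)
  have hSSabs : Integrable (fun ω ↦ S ω * |S ω|) μ := by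
    refine hS2.integrable_sq.mono' (hS.aestronglyMeasurable.mul hSabs.aestronglyMeasurable)
      (Filter.Eventually.of_forall fun ω ↦ ?_)
    simp [sq]
  have hI1 : IndepFun (fun ω ↦ S ω * |S ω|) Y μ :=
    hSY.comp (measurable_id.mul measurable_abs) measurable_id
  have hI2 : IndepFun (fun ω ↦ |S ω|) (fun ω ↦ Y ω ^ 2) μ :=
    hSY.comp measurable_abs (measurable_id.pow_const 2)
  have hodd : ∫ ω, S ω * |S ω| * Y ω ∂μ = 0 := by
    rw [hI1.integral_fun_mul_eq_mul_integral hSSabs.1 hY.aestronglyMeasurable, hYmean, mul_zero]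
  have heven : ∫ ω, |S ω| * Y ω ^ 2 ∂μ = (∫ ω, |S ω| ∂μ) * ∫ ω, Y ω ^ 2 ∂μ :=
    hI2.integral_fun_mul_eq_mul_integral hSabs.1 hY2.integrable_sq.1
  have i1 : Integrable (fun ω ↦ 3 * (S ω * |S ω| * Y ω)) μ :=
    (hI1.integrable_mul hSSabs (hY.integrable (by norm_num))).const_mul 3
  have i2 : Integrable (fun ω ↦ 3 * (|S ω| * Y ω ^ 2)) μ :=
    (hI2.integrable_mul hSabs hY2.integrable_sq).const_mul 3
  calc ∫ ω, |S ω + Y ω| ^ 3 ∂μ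
      ≤ ∫ ω, (|S ω| ^ 3 + 3 * (S ω * |S ω| * Y ω) + 3 * (|S ω| * Y ω ^ 2) + |Y ω| ^ 3) ∂μ :=
        integral_mono hSY3 (((hS3.fun_add i1).fun_add i2).fun_add hY3)
          fun ω ↦ abs_add_pow_three_le (S ω) (Y ω)
    _ = _ := by
      rw [integral_add ((hS3.fun_add i1).fun_add i2) hY3, integral_add (hS3.fun_add i1) i2,
        integral_add hS3 i1, integral_const_mul, integral_const_mul, hodd, heven]
      ring

theorem iIndepFun.integral_finsetSum_sq (hindep : iIndepFun X μ)
    (hmeas : ∀ i, Measurable (X i)) (hX : ∀ i, MemLp (X i) 2 μ)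
    (hmean : ∀ i, ∫ ω, X i ω ∂μ = 0) (s : Finset ι) :
    ∫ ω, (∑ i ∈ s, X i ω) ^ 2 ∂μ = ∑ i ∈ s, ∫ ω, X i ω ^ 2 ∂μ := by
  classical
  induction s using Finset.induction_on with
  | empty => simp
  | insert j s hj ih =>
    simp_rw [Finset.sum_insert hj, add_comm (X j _)]
    rw [integral_add_sq_of_indepFun (hindep.indepFun_fun_finsetSum_of_notMem hmeas hj)
      (memLp_finsetSum s fun i _ ↦ hX i) (hX j) (hmean j), ih, add_comm]

theorem iIndepFun.integral_abs_finsetSum_pow_three_le (hindep : iIndepFun X μ)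
    (hmeas : ∀ i, Measurable (X i)) (hX : ∀ i, MemLp (X i) 3 μ)
    (hmean : ∀ i, ∫ ω, X i ω ∂μ = 0) (s : Finset ι) :
    ∫ ω, |∑ i ∈ s, X i ω| ^ 3 ∂μ ≤
      ∑ i ∈ s, ∫ ω, |X i ω| ^ 3 ∂μ + 2 * √(∑ i ∈ s, ∫ ω, X i ω ^ 2 ∂μ) ^ 3 := by
  classical
  have hX2 : ∀ i, MemLp (X i) 2 μ := fun i ↦ (hX i).mono_exponent (by norm_num)
  induction s using Finset.induction_on with
  | empty => simp
  | insert j s hj ih =>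
    simp_rw [Finset.sum_insert hj, add_comm (X j _)]
    have habs : ∫ ω, |∑ i ∈ s, X i ω| ∂μ ≤ √(∑ i ∈ s, ∫ ω, X i ω ^ 2 ∂μ) := by
      rw [← hindep.integral_finsetSum_sq hmeas hX2 hmean s]
      exact integral_abs_le_sqrt_integral_sq (memLp_finsetSum s fun i _ ↦ hX2 i)
    set A := ∑ i ∈ s, ∫ ω, X i ω ^ 2 ∂μ
    set B := ∫ ω, X j ω ^ 2 ∂μ
    have hA : 0 ≤ A := Finset.sum_nonneg fun i _ ↦ integral_nonneg fun ω ↦ sq_nonneg _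
    have hB : 0 ≤ B := integral_nonneg fun ω ↦ sq_nonneg _
    have hstep := integral_abs_add_pow_three_le_of_indepFun
      (hindep.indepFun_fun_finsetSum_of_notMem hmeas hj) (memLp_finsetSum s fun i _ ↦ hX i)
      (hX j) (hmean j)
    calc _ ≤ _ := hstep
      _ ≤ (∑ i ∈ s, ∫ ω, |X i ω| ^ 3 ∂μ + 2 * √A ^ 3) + 3 * √A * B + ∫ ω, |X j ω| ^ 3 ∂μ := by
        gcongr
      _ ≤ _ := by
        rw [add_comm B A]
        linarith [two_mul_sqrt_pow_three_add_le hA hB]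

end ProbabilityTheory

theorem rosenthal_third_moment_general {Ω : Type*} [MeasurableSpace Ω] (μ : Measure Ω)
    [IsProbabilityMeasure μ] (n : ℕ) (X : Fin n → Ω → ℝ) (b : Fin n → ℝ)
    (hmeas : ∀ i, Measurable (X i))
    (hindep : iIndepFun X μ)
    (hmean : ∀ i, ∫ ω, X i ω ∂μ = 0)
    (hvar : ∀ i, ∫ ω, (X i ω) ^ 2 ∂μ ≤ (b i) ^ 2)
    (hint : ∀ i, Integrable (fun ω => |X i ω| ^ 3) μ) :
    ∫ ω, |∑ i, X i ω| ^ 3 ∂μ ≤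
      (∑ i, ∫ ω, |X i ω| ^ 3 ∂μ) + 2 * Real.sqrt (∑ i, (b i) ^ 2) ^ 3 := by
  have hX : ∀ i, MemLp (X i) 3 μ := fun i ↦
    (memLp_nat_iff_integrable_abs_pow (hmeas i).aestronglyMeasurable three_ne_zero).2 (hint i)
  calc _ ≤ ∑ i, ∫ ω, |X i ω| ^ 3 ∂μ + 2 * √(∑ i, ∫ ω, X i ω ^ 2 ∂μ) ^ 3 :=
        hindep.integral_abs_finsetSum_pow_three_le hmeas hX hmean Finset.univ
    _ ≤ _ := by gcongr with i; exact hvar i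

theorem rosenthal_third_moment {Ω : Type*} [MeasurableSpace Ω] (μ : Measure Ω)
    [IsProbabilityMeasure μ] (n : ℕ) (X : Fin n → Ω → ℝ) (b : Fin n → ℝ)
    (hmeas : ∀ i, Measurable (X i))
    (hindep : iIndepFun X μ)
    (hb : ∀ i, 0 < b i)
    (hmean : ∀ i, ∫ ω, X i ω ∂μ = 0)
    (hvar : ∀ i, ∫ ω, (X i ω) ^ 2 ∂μ ≤ (b i) ^ 2)
    (hint : ∀ i, Integrable (fun ω => |X i ω| ^ 3) μ) :
    ∫ ω, |∑ i, X i ω| ^ 3 ∂μ ≤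
      (∑ i, ∫ ω, |X i ω| ^ 3 ∂μ) + 2 * Real.sqrt (∑ i, (b i) ^ 2) ^ 3 :=
  rosenthal_third_moment_general μ n X b hmeas hindep hmean hvar hint
end

section
/- Let X₁, …, X_n be independent real-valued random variables with E X_i = 0 and E X_i² ≤ b_i². Then for every t ∈ (2,4], E|S_n|^t ≤ 2^{max(0, t−3)}·(A(t) + (t−1)·B_n^t), where S_n = ∑X_i, A(t) = ∑E|X_i|^t, B_n = (∑b_i²)^{1/2}. -/
/-
For `2 < t` and `c = 2 ^ max 0 (t - 3)` one has the second-order bound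
`|x + y|^t ≤ |x|^t + t |x|^(t-2) x y + c t(t-1)/2 |x|^(t-2) y² + c |y|^t`:
the difference of the two sides is convex in `y`, its second derivative being
`t(t-1) (c (|x|^(t-2) + |y|^(t-2)) - |x + y|^(t-2)) ≥ 0`, and it has a critical zero at `y = 0`.
Take `x = S_k`, `y = X_{k+1}` and integrate: the linear term vanishes by independence and
`E X_{k+1} = 0`, and the quadratic term factors as `E|S_k|^(t-2) · E X_{k+1}²`. For `t ≤ 4`,
Jensen bounds `E|S_k|^(t-2)` by `(E S_k²)^((t-2)/2)`, and Bernoulli's inequality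
`V^(t/2) + (t/2) V^(t/2-1) σ² ≤ (V + σ²)^(t/2)` closes the induction on the number of
summands.
-/

open MeasureTheory ProbabilityTheory Filter Set Topology

theorem le_of_hasDerivAt_of_monotone {f f' : ℝ → ℝ} (hf : ∀ x, HasDerivAt f (f' x) x)
    (hf' : Monotone f') {a : ℝ} (ha : f' a = 0) (x : ℝ) : f a ≤ f x := by
  have hcont : Continuous f := continuous_iff_continuousAt.2 fun x => (hf x).continuousAt
  rcases le_total a x with hax | hxa
  · refine monotoneOn_of_hasDerivWithinAt_nonneg (convex_Ici a) hcont.continuousOn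
      (fun y _ => (hf y).hasDerivWithinAt) (fun y hy => ?_) self_mem_Ici hax hax
    rw [interior_Ici] at hy
    exact ha ▸ hf' hy.out.le
  · refine antitoneOn_of_hasDerivWithinAt_nonpos (convex_Iic a) hcont.continuousOn
      (fun y _ => (hf y).hasDerivWithinAt) (fun y hy => ?_) hxa self_mem_Iic hxa
    rw [interior_Iic] at hy
    exact ha ▸ hf' hy.out.le

namespace Real

theorem abs_add_rpow_le_two_rpow_mul {p : ℝ} (hp : 0 ≤ p) (x y : ℝ) :
    |x + y| ^ p ≤ 2 ^ max 0 (p - 1) * (|x| ^ p + |y| ^ p) := by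
  refine (rpow_le_rpow (abs_nonneg _) (abs_add_le x y) hp).trans ?_
  lift |x| to NNReal using abs_nonneg x with a
  lift |y| to NNReal using abs_nonneg y with b
  rcases le_or_gt p 1 with hp1 | hp1
  · rw [max_eq_left (by linarith), rpow_zero, one_mul]
    exact_mod_cast NNReal.rpow_add_le_add_rpow a b hp hp1
  · rw [max_eq_right (by linarith)]
    exact_mod_cast NNReal.rpow_add_le_mul_rpow_add_rpow a b hp1.le

theorem hasDerivAt_abs_rpow_mul_self {p : ℝ} (hp : 0 < p) (x : ℝ) :
    HasDerivAt (fun x : ℝ => |x| ^ p * x) ((p + 1) * |x| ^ p) x := by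
  rcases lt_trichotomy x 0 with hx | rfl | hx
  · have h : HasDerivAt (fun x : ℝ => -(-x) ^ (p + 1)) ((p + 1) * (-x) ^ p) x :=
      ((hasDerivAt_rpow_const (p := p + 1) (Or.inl (neg_ne_zero.2 hx.ne))).comp x
        (hasDerivAt_neg x)).neg.congr_deriv (by simp)
    rw [abs_of_neg hx]
    refine h.congr_of_eventuallyEq ?_
    filter_upwards [Iio_mem_nhds hx] with y hy
    rw [abs_of_neg hy, rpow_add_one (neg_ne_zero.2 hy.ne)]
    ring
  · rw [hasDerivAt_iff_tendsto_slope, abs_zero, zero_rpow hp.ne', mul_zero]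
    have h : Tendsto (fun y : ℝ => |y| ^ p) (𝓝 0) (𝓝 0) := by
      simpa [Function.comp_def, zero_rpow hp.ne'] using
        ((continuous_rpow_const hp.le).comp continuous_abs).tendsto 0
    refine (h.mono_left nhdsWithin_le_nhds).congr' ?_
    filter_upwards [self_mem_nhdsWithin] with y hy
    simp [slope_def_field, mul_div_cancel_right₀ _ (show y ≠ 0 from hy)]
  · have h : HasDerivAt (fun x : ℝ => x ^ (p + 1)) ((p + 1) * x ^ p) x := by
      simpa using hasDerivAt_rpow_const (p := p + 1) (Or.inl hx.ne')
    rw [abs_of_pos hx]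
    refine h.congr_of_eventuallyEq ?_
    filter_upwards [Ioi_mem_nhds hx] with y hy
    rw [abs_of_pos hy, rpow_add_one hy.ne']

theorem rpow_add_mul_rpow_sub_one_mul_le_add_rpow {p u v : ℝ} (hp : 1 ≤ p) (hu : 0 ≤ u)
    (hv : 0 ≤ v) : u ^ p + p * u ^ (p - 1) * v ≤ (u + v) ^ p := by
  rcases hu.eq_or_lt with rfl | hu
  · rcases hp.eq_or_lt with rfl | hp
    · simp
    · simpa [zero_rpow (by linarith : p ≠ 0), zero_rpow (by linarith : p - 1 ≠ 0)] using
        rpow_nonneg hv p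
  · calc u ^ p + p * u ^ (p - 1) * v = u ^ p * (1 + p * (v / u)) := by
          rw [rpow_sub_one hu.ne']; field_simp
      _ ≤ u ^ p * (1 + v / u) ^ p := by
          gcongr
          exact one_add_mul_self_le_rpow_one_add (by linarith [div_nonneg hv hu.le]) hp
      _ = (u + v) ^ p := by
          rw [← mul_rpow hu.le (by positivity)]
          congr 1
          field_simp

theorem abs_add_rpow_le_taylor {t : ℝ} (ht : 2 < t) (x y : ℝ) :
    |x + y| ^ t ≤ |x| ^ t + t * (|x| ^ (t - 2) * x * y)
      + 2 ^ max 0 (t - 3) * (t * (t - 1) / 2) * (|x| ^ (t - 2) * y ^ 2)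
      + 2 ^ max 0 (t - 3) * |y| ^ t := by
  set c : ℝ := 2 ^ max 0 (t - 3)
  have ht1 : 1 < t := by linarith
  have hq : 0 < t - 2 := by linarith
  have hG : ∀ z, HasDerivAt (fun z => |x| ^ t + t * |x| ^ (t - 2) * x * z
      + c * (t * (t - 1) / 2) * |x| ^ (t - 2) * z ^ 2 + c * |z| ^ t - |x + z| ^ t)
      (t * |x| ^ (t - 2) * x + c * (t * (t - 1)) * |x| ^ (t - 2) * z
        + c * (t * (|z| ^ (t - 2) * z)) - t * (|x + z| ^ (t - 2) * (x + z))) z := fun z =>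
    ((((hasDerivAt_const z _).add ((hasDerivAt_id' z).const_mul _)).add
      ((hasDerivAt_pow 2 z).const_mul _)).add ((hasDerivAt_abs_rpow z ht1).const_mul c)).sub
      ((hasDerivAt_abs_rpow (x + z) ht1).comp z ((hasDerivAt_id' z).const_add x))
      |>.congr_deriv (by push_cast; ring)
  have hΦ : ∀ z, HasDerivAt
      (fun z => t * |x| ^ (t - 2) * x + c * (t * (t - 1)) * |x| ^ (t - 2) * z
        + c * (t * (|z| ^ (t - 2) * z)) - t * (|x + z| ^ (t - 2) * (x + z)))
      (t * (t - 1) * (c * (|x| ^ (t - 2) + |z| ^ (t - 2)) - |x + z| ^ (t - 2))) z := fun z =>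
    ((((hasDerivAt_const z _).add ((hasDerivAt_id' z).const_mul _)).add
      (((hasDerivAt_abs_rpow_mul_self hq z).const_mul t).const_mul c)).sub
      (((hasDerivAt_abs_rpow_mul_self hq (x + z)).comp z
        ((hasDerivAt_id' z).const_add x)).const_mul t))
      |>.congr_deriv (by ring)
  have hΦ_nonneg : ∀ z,
      0 ≤ t * (t - 1) * (c * (|x| ^ (t - 2) + |z| ^ (t - 2)) - |x + z| ^ (t - 2)) := by
    intro z
    have h := abs_add_rpow_le_two_rpow_mul hq.le x z
    rw [show t - 2 - 1 = t - 3 by ring] at h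
    exact mul_nonneg (by nlinarith) (sub_nonneg.2 h)
  have hmin := le_of_hasDerivAt_of_monotone (a := 0) hG
    (monotone_of_hasDerivAt_nonneg hΦ hΦ_nonneg)
    (by simp only [mul_zero, add_zero, abs_zero]; ring) y
  simp only [mul_zero, add_zero, ne_eq, OfNat.ofNat_ne_zero, not_false_eq_true, zero_pow,
    abs_zero, zero_rpow (by linarith : t ≠ 0), sub_self, sub_nonneg] at hmin
  linarith

end Real

namespace MeasureTheory

variable {Ω : Type*} [MeasurableSpace Ω] {μ : Measure Ω}

theorem MemLp.integrable_abs_rpow [IsFiniteMeasure μ] {f : Ω → ℝ} {p r : ℝ}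
    (hf : MemLp f (ENNReal.ofReal p) μ) (hr : 0 ≤ r) (hrp : r ≤ p) :
    Integrable (fun ω => |f ω| ^ r) μ := by
  simpa [ENNReal.toReal_ofReal hr] using
    (hf.mono_exponent (ENNReal.ofReal_le_ofReal hrp)).integrable_norm_rpow'

theorem MemLp.integrable_abs_rpow_sub_two_mul_self [IsFiniteMeasure μ] {f : Ω → ℝ} {p : ℝ}
    (hf : MemLp f (ENNReal.ofReal p) μ) (hp : 2 ≤ p) :
    Integrable (fun ω => |f ω| ^ (p - 2) * f ω) μ := by
  refine (hf.integrable_abs_rpow (r := p - 1) (by linarith) (by linarith)).mono'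
    ((by fun_prop : Measurable fun x : ℝ => |x| ^ (p - 2) * x).comp_aemeasurable
      hf.1.aemeasurable).aestronglyMeasurable (ae_of_all _ fun ω => ?_)
  rw [norm_mul, Real.norm_eq_abs, Real.norm_eq_abs, abs_of_nonneg (by positivity),
    ← Real.rpow_add_one' (abs_nonneg _) (by linarith)]
  exact le_of_eq (by ring_nf)

end MeasureTheory

namespace ProbabilityTheory

variable {Ω : Type*} [MeasurableSpace Ω] {μ : Measure Ω} [IsProbabilityMeasure μ]

theorem integral_abs_rpow_le_integral_sq_rpow {f : Ω → ℝ} (hf : MemLp f 2 μ) {p : ℝ}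
    (hp0 : 0 ≤ p) (hp2 : p ≤ 2) :
    ∫ ω, |f ω| ^ p ∂μ ≤ (∫ ω, f ω ^ 2 ∂μ) ^ (p / 2) := by
  have habs : ∀ ω, |f ω| ^ p = (f ω ^ 2) ^ (p / 2) := fun ω => by
    rw [← sq_abs, ← Real.rpow_natCast, ← Real.rpow_mul (abs_nonneg _)]
    ring_nf
  have hint : Integrable (fun ω => |f ω| ^ p) μ :=
    (show MemLp f (ENNReal.ofReal 2) μ by simpa using hf).integrable_abs_rpow hp0 hp2
  simp_rw [habs] at hint ⊢
  exact (Real.concaveOn_rpow (by positivity) (by linarith)).le_map_integral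
    (Real.continuous_rpow_const (by positivity)).continuousOn isClosed_Ici
    (ae_of_all _ fun ω => sq_nonneg (f ω)) hf.integrable_sq hint

theorem integral_sq_sum_eq_sum_integral_sq {ι : Type*} {X : ι → Ω → ℝ} {s : Finset ι}
    (hX : ∀ i ∈ s, MemLp (X i) 2 μ) (hindep : Set.Pairwise s fun i j => X i ⟂ᵢ[μ] X j)
    (hmean : ∀ i ∈ s, ∫ ω, X i ω ∂μ = 0) :
    ∫ ω, (∑ i ∈ s, X i ω) ^ 2 ∂μ = ∑ i ∈ s, ∫ ω, X i ω ^ 2 ∂μ := by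
  have hsum := IndepFun.variance_sum hX hindep
  have hmean_sum : ∫ ω, (∑ i ∈ s, X i) ω ∂μ = 0 := by
    simp only [Finset.sum_apply]
    rw [integral_finsetSum s fun i hi => (hX i hi).integrable one_le_two]
    exact Finset.sum_eq_zero hmean
  rw [variance_of_integral_eq_zero (memLp_finsetSum' s hX).aemeasurable hmean_sum] at hsum
  simp only [Finset.sum_apply] at hsum
  rw [hsum]
  exact Finset.sum_congr rfl fun i hi =>
    variance_of_integral_eq_zero (hX i hi).aemeasurable (hmean i hi)

theorem integral_abs_add_rpow_le {S Y : Ω → ℝ} {t : ℝ} (ht : 2 < t) (hSY : S ⟂ᵢ[μ] Y)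
    (hS : MemLp S (ENNReal.ofReal t) μ) (hY : MemLp Y (ENNReal.ofReal t) μ)
    (hY0 : ∫ ω, Y ω ∂μ = 0) :
    ∫ ω, |S ω + Y ω| ^ t ∂μ ≤ ∫ ω, |S ω| ^ t ∂μ
      + 2 ^ max 0 (t - 3) * (t * (t - 1) / 2)
        * ((∫ ω, |S ω| ^ (t - 2) ∂μ) * ∫ ω, Y ω ^ 2 ∂μ)
      + 2 ^ max 0 (t - 3) * ∫ ω, |Y ω| ^ t ∂μ := by
  set c : ℝ := 2 ^ max 0 (t - 3)
  have hY2 : MemLp Y 2 μ :=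
    hY.mono_exponent (by simpa using ENNReal.ofReal_le_ofReal ht.le)
  have hSt := hS.integrable_abs_rpow (by linarith) le_rfl
  have hYt := hY.integrable_abs_rpow (by linarith) le_rfl
  have hS1 := hS.integrable_abs_rpow_sub_two_mul_self ht.le
  have hS2 := hS.integrable_abs_rpow (r := t - 2) (by linarith) (by linarith)
  have hind1 : (fun ω => |S ω| ^ (t - 2) * S ω) ⟂ᵢ[μ] Y :=
    hSY.comp (by fun_prop : Measurable fun x : ℝ => |x| ^ (t - 2) * x) measurable_id
  have hind2 : (fun ω => |S ω| ^ (t - 2)) ⟂ᵢ[μ] (fun ω => Y ω ^ 2) :=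
    hSY.comp (by fun_prop : Measurable fun x : ℝ => |x| ^ (t - 2))
      (by fun_prop : Measurable fun x : ℝ => x ^ 2)
  have hI1 : ∫ ω, |S ω| ^ (t - 2) * S ω * Y ω ∂μ = 0 := by
    have := hind1.integral_mul_eq_mul_integral hS1.aestronglyMeasurable hY.1
    simpa [hY0] using this
  have hI2 : ∫ ω, |S ω| ^ (t - 2) * Y ω ^ 2 ∂μ
      = (∫ ω, |S ω| ^ (t - 2) ∂μ) * ∫ ω, Y ω ^ 2 ∂μ :=
    hind2.integral_mul_eq_mul_integral hS2.aestronglyMeasurable hY2.integrable_sq.1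
  have hm1 : Integrable (fun ω => |S ω| ^ (t - 2) * S ω * Y ω) μ :=
    hind1.integrable_mul hS1 (hY2.integrable one_le_two)
  have hm2 : Integrable (fun ω => |S ω| ^ (t - 2) * Y ω ^ 2) μ :=
    hind2.integrable_mul hS2 hY2.integrable_sq
  calc ∫ ω, |S ω + Y ω| ^ t ∂μ
      ≤ ∫ ω, (|S ω| ^ t + t * (|S ω| ^ (t - 2) * S ω * Y ω)
          + c * (t * (t - 1) / 2) * (|S ω| ^ (t - 2) * Y ω ^ 2) + c * |Y ω| ^ t) ∂μ :=
        integral_mono ((hS.add hY).integrable_abs_rpow (by linarith) le_rfl)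
          (((hSt.add (hm1.const_mul t)).add (hm2.const_mul _)).add (hYt.const_mul c))
          fun ω => Real.abs_add_rpow_le_taylor ht (S ω) (Y ω)
    _ = _ := by
        rw [integral_add ?_ (hYt.const_mul c), integral_add ?_ (hm2.const_mul _),
          integral_add hSt (hm1.const_mul t), integral_const_mul, integral_const_mul,
          integral_const_mul, hI1, hI2, mul_zero, add_zero]
        · exact hSt.add (hm1.const_mul t)
        · exact (hSt.add (hm1.const_mul t)).add (hm2.const_mul _)

theorem integral_abs_sum_rpow_le {ι : Type*} {X : ι → Ω → ℝ} {t : ℝ} (ht : t ∈ Ioc 2 4)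
    (hmeas : ∀ i, Measurable (X i)) (hindep : iIndepFun X μ)
    (hmean : ∀ i, ∫ ω, X i ω ∂μ = 0)
    (hX : ∀ i, MemLp (X i) (ENNReal.ofReal t) μ) (s : Finset ι) :
    ∫ ω, |∑ i ∈ s, X i ω| ^ t ∂μ ≤ 2 ^ max 0 (t - 3) *
        (∑ i ∈ s, ∫ ω, |X i ω| ^ t ∂μ
          + (t - 1) * (∑ i ∈ s, ∫ ω, X i ω ^ 2 ∂μ) ^ (t / 2)) := by
  classical
  obtain ⟨ht2, ht4⟩ := ht
  set c : ℝ := 2 ^ max 0 (t - 3) with hc_def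
  have hc : 0 ≤ c := by positivity
  have hX2 : ∀ i, MemLp (X i) 2 μ := fun i =>
    (hX i).mono_exponent (by simpa using ENNReal.ofReal_le_ofReal ht2.le)
  induction s using Finset.induction_on with
  | empty =>
    simp [Real.zero_rpow (by linarith : t ≠ 0), Real.zero_rpow (by linarith : t / 2 ≠ 0)]
  | insert j s hj ih =>
    set V := ∑ i ∈ s, ∫ ω, X i ω ^ 2 ∂μ
    set σ2 := ∫ ω, X j ω ^ 2 ∂μ
    have hSX : (fun ω => ∑ i ∈ s, X i ω) ⟂ᵢ[μ] X j := by
      simpa [Finset.sum_fn] using hindep.indepFun_finsetSum_of_notMem hmeas hj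
    have hstep := integral_abs_add_rpow_le ht2 hSX (memLp_finsetSum s fun i _ => hX i) (hX j)
      (hmean j)
    rw [← hc_def] at hstep
    have hlyap : ∫ ω, |∑ i ∈ s, X i ω| ^ (t - 2) ∂μ ≤ V ^ (t / 2 - 1) := by
      calc _ ≤ (∫ ω, (∑ i ∈ s, X i ω) ^ 2 ∂μ) ^ ((t - 2) / 2) :=
            integral_abs_rpow_le_integral_sq_rpow (memLp_finsetSum s fun i _ => hX2 i)
              (by linarith) (by linarith)
        _ = V ^ (t / 2 - 1) := by
            rw [integral_sq_sum_eq_sum_integral_sq (fun i _ => hX2 i)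
              (fun i _ k _ hik => hindep.indepFun hik) (fun i _ => hmean i),
              show (t - 2) / 2 = t / 2 - 1 by ring]
    have hV : 0 ≤ V := Finset.sum_nonneg fun i _ => integral_nonneg fun ω => sq_nonneg _
    have hσ2 : 0 ≤ σ2 := integral_nonneg fun ω => sq_nonneg _
    have hbern := Real.rpow_add_mul_rpow_sub_one_mul_le_add_rpow (by linarith : 1 ≤ t / 2) hV hσ2
    have ht1 : 0 ≤ t - 1 := by linarith
    have hmid : c * (t * (t - 1) / 2) * ((∫ ω, |∑ i ∈ s, X i ω| ^ (t - 2) ∂μ) * σ2)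
        ≤ c * (t - 1) * (t / 2 * V ^ (t / 2 - 1) * σ2) :=
      calc _ ≤ c * (t * (t - 1) / 2) * (V ^ (t / 2 - 1) * σ2) := by gcongr
        _ = _ := by ring
    have hlast : c * (t - 1) * (V ^ (t / 2) + t / 2 * V ^ (t / 2 - 1) * σ2)
        ≤ c * (t - 1) * (V + σ2) ^ (t / 2) :=
      mul_le_mul_of_nonneg_left hbern (mul_nonneg hc ht1)
    rw [Finset.sum_insert hj, Finset.sum_insert hj, add_comm σ2]
    simp_rw [Finset.sum_insert hj, add_comm (X j _)]
    linarith

end ProbabilityTheory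

theorem rosenthal_indep_2_4_general {Ω : Type*} [MeasurableSpace Ω] (μ : Measure Ω)
    [IsProbabilityMeasure μ] (n : ℕ) (X : Fin n → Ω → ℝ) (b : Fin n → ℝ)
    (t : ℝ) (ht : t ∈ Set.Ioc (2 : ℝ) 4)
    (hmeas : ∀ i, Measurable (X i))
    (hindep : iIndepFun X μ)
    (hmean : ∀ i, ∫ ω, X i ω ∂μ = 0)
    (hvar : ∀ i, ∫ ω, (X i ω) ^ 2 ∂μ ≤ (b i) ^ 2)
    (hint : ∀ i, Integrable (fun ω => |X i ω| ^ t) μ) :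
    ∫ ω, |∑ i, X i ω| ^ t ∂μ ≤
      2 ^ (max 0 (t - 3)) *
        ((∑ i, ∫ ω, |X i ω| ^ t ∂μ) + (t - 1) * (∑ i, (b i) ^ 2) ^ (t / 2)) := by
  have ht0 : 0 < t := by linarith [ht.1]
  have hX : ∀ i, MemLp (X i) (ENNReal.ofReal t) μ := fun i =>
    (integrable_norm_rpow_iff (hmeas i).aestronglyMeasurable (by simpa using ht0)
      ENNReal.ofReal_ne_top).1 (by simpa [ENNReal.toReal_ofReal ht0.le] using hint i)
  have hsum : (∑ i, ∫ ω, X i ω ^ 2 ∂μ) ^ (t / 2) ≤ (∑ i, b i ^ 2) ^ (t / 2) :=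
    Real.rpow_le_rpow (Finset.sum_nonneg fun i _ => integral_nonneg fun ω => sq_nonneg _)
      (Finset.sum_le_sum fun i _ => hvar i) (by positivity)
  calc _ ≤ _ := integral_abs_sum_rpow_le ht hmeas hindep hmean hX Finset.univ
    _ ≤ _ := by gcongr; linarith [ht.1]

theorem rosenthal_indep_2_4 {Ω : Type*} [MeasurableSpace Ω] (μ : Measure Ω)
    [IsProbabilityMeasure μ] (n : ℕ) (X : Fin n → Ω → ℝ) (b : Fin n → ℝ)
    (t : ℝ) (ht : t ∈ Set.Ioc (2 : ℝ) 4)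
    (hmeas : ∀ i, Measurable (X i))
    (hindep : iIndepFun X μ)
    (hb : ∀ i, 0 < b i)
    (hmean : ∀ i, ∫ ω, X i ω ∂μ = 0)
    (hvar : ∀ i, ∫ ω, (X i ω) ^ 2 ∂μ ≤ (b i) ^ 2)
    (hint : ∀ i, Integrable (fun ω => |X i ω| ^ t) μ) :
    ∫ ω, |∑ i, X i ω| ^ t ∂μ ≤
      2 ^ (max 0 (t - 3)) *
        ((∑ i, ∫ ω, |X i ω| ^ t ∂μ) + (t - 1) * (∑ i, (b i) ^ 2) ^ (t / 2)) :=
  rosenthal_indep_2_4_general μ n X b t ht hmeas hindep hmean hvar hint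
end

section
/- Let Q(x) := ‖x‖² on a real Hilbert space H. Then for every t ≥ 2 and all x, y ∈ H: ‖x+y‖^t − ‖x‖^t ≤ t·‖x‖^{t−2}·⟨x, y⟩ + (t(t−1)/2)·(‖x‖ + ‖y‖)^{t−2}·‖y‖². -/
/-!
Put `f θ = ‖x + θ • y‖ ^ t`, so that `f' θ = t * ⟪J (x + θ • y), y⟫`
with `J a = ‖a‖ ^ (t - 2) • a`.
On the ball of radius `R = ‖x‖ + ‖y‖` the map `J` is Lipschitz with constant `(t - 1) * R ^ (t - 2)`,
which comes down to Bernoulli's inequality with exponent `t - 1 ≥ 1`. Hence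
`f' θ ≤ f' 0 + t * (t - 1) * R ^ (t - 2) * ‖y‖ ^ 2 * θ` on `[0, 1]`, and comparing `f` with the
quadratic having this derivative gives the bound on `f 1 - f 0`.
-/

open Real Set

lemma rpow_sub_rpow_mul_le {a b s : ℝ} (hb : 0 ≤ b) (hba : b ≤ a) (hs : 0 ≤ s) :
    (a ^ s - b ^ s) * b ≤ s * a ^ s * (a - b) := by
  rcases hb.eq_or_lt with rfl | hb0
  · simp only [mul_zero, sub_zero]
    positivity
  have ha0 : 0 < a := hb0.trans_le hba
  -- Bernoulli's inequality for the exponent `1 + s` at `b / a`, cleared of denominators.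
  have bernoulli := one_add_mul_self_le_rpow_one_add (s := b / a - 1) (p := 1 + s)
    (by linarith [div_nonneg hb ha0.le]) (by linarith)
  rw [add_sub_cancel, div_rpow hb ha0.le, rpow_add hb0, rpow_add ha0, rpow_one, rpow_one,
    le_div_iff₀ (by positivity)] at bernoulli
  field_simp at bernoulli
  linear_combination bernoulli

section NormedSpace

variable {E : Type*} [SeminormedAddCommGroup E] [NormedSpace ℝ E] {s : ℝ}

lemma norm_rpow_smul_sub_rpow_smul_le_of_norm_le (hs : 0 ≤ s) {a b : E} (hba : ‖b‖ ≤ ‖a‖) :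
    ‖‖a‖ ^ s • a - ‖b‖ ^ s • b‖ ≤ (1 + s) * ‖a‖ ^ s * ‖a - b‖ := by
  have hmono : ‖b‖ ^ s ≤ ‖a‖ ^ s := rpow_le_rpow (norm_nonneg b) hba hs
  calc ‖‖a‖ ^ s • a - ‖b‖ ^ s • b‖ = ‖‖a‖ ^ s • (a - b) + (‖a‖ ^ s - ‖b‖ ^ s) • b‖ := by
        rw [smul_sub, sub_smul, sub_add_sub_cancel]
    _ ≤ ‖a‖ ^ s * ‖a - b‖ + (‖a‖ ^ s - ‖b‖ ^ s) * ‖b‖ := by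
        refine (norm_add_le _ _).trans_eq ?_
        rw [norm_smul_of_nonneg (by positivity), norm_smul_of_nonneg (sub_nonneg.2 hmono)]
    _ ≤ ‖a‖ ^ s * ‖a - b‖ + s * ‖a‖ ^ s * (‖a‖ - ‖b‖) := by
        grw [rpow_sub_rpow_mul_le (norm_nonneg b) hba hs]
    _ ≤ ‖a‖ ^ s * ‖a - b‖ + s * ‖a‖ ^ s * ‖a - b‖ := by
        gcongr
        exact norm_sub_norm_le a b
    _ = (1 + s) * ‖a‖ ^ s * ‖a - b‖ := by ring

lemma norm_rpow_smul_sub_rpow_smul_le (hs : 0 ≤ s) {a b : E} {R : ℝ} (ha : ‖a‖ ≤ R)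
    (hb : ‖b‖ ≤ R) : ‖‖a‖ ^ s • a - ‖b‖ ^ s • b‖ ≤ (1 + s) * R ^ s * ‖a - b‖ := by
  wlog hba : ‖b‖ ≤ ‖a‖ generalizing a b
  · rw [norm_sub_rev, norm_sub_rev a]
    exact this hb ha (le_of_not_ge hba)
  calc ‖‖a‖ ^ s • a - ‖b‖ ^ s • b‖ ≤ (1 + s) * ‖a‖ ^ s * ‖a - b‖ :=
        norm_rpow_smul_sub_rpow_smul_le_of_norm_le hs hba
    _ ≤ (1 + s) * R ^ s * ‖a - b‖ := by gcongr

end NormedSpace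

lemma sub_le_of_hasDerivAt_le_add_mul {f f' : ℝ → ℝ} {m C : ℝ}
    (hf : ∀ θ ∈ Icc (0 : ℝ) 1, HasDerivAt f (f' θ) θ)
    (hf' : ∀ θ ∈ Icc (0 : ℝ) 1, f' θ ≤ m + C * θ) :
    f 1 - f 0 ≤ m + C / 2 := by
  have hB (θ : ℝ) : HasDerivAt (fun θ ↦ f 0 + m * θ + C / 2 * θ ^ 2) (m + C * θ) θ := by
    refine ((((hasDerivAt_id θ).const_mul m).const_add (f 0)).add
      ((hasDerivAt_pow 2 θ).const_mul (C / 2))).congr_deriv ?_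
    simp only [Nat.cast_ofNat]
    ring
  have := image_le_of_deriv_right_le_deriv_boundary (a := 0) (b := 1)
    (fun θ hθ ↦ (hf θ hθ).continuousAt.continuousWithinAt)
    (fun θ hθ ↦ (hf θ (Ico_subset_Icc_self hθ)).hasDerivWithinAt) (by simp)
    (fun θ _ ↦ (hB θ).continuousAt.continuousWithinAt) (fun θ _ ↦ (hB θ).hasDerivWithinAt)
    (fun θ hθ ↦ hf' θ (Ico_subset_Icc_self hθ)) (right_mem_Icc.2 zero_le_one)
  linarith

section InnerProductSpace

variable {H : Type*} [NormedAddCommGroup H] [InnerProductSpace ℝ H]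

lemma hasDerivAt_norm_add_smul_rpow {t : ℝ} (ht : 1 < t) (x y : H) (θ : ℝ) :
    HasDerivAt (fun θ : ℝ ↦ ‖x + θ • y‖ ^ t)
      (t * ‖x + θ • y‖ ^ (t - 2) * inner ℝ (x + θ • y) y) θ := by
  have hline : HasDerivAt (fun θ : ℝ ↦ x + θ • y) y θ := by
    simpa using ((hasDerivAt_id θ).smul_const y).const_add x
  refine ((hasFDerivAt_norm_rpow (x + θ • y) ht).comp_hasDerivAt θ hline).congr_deriv ?_
  simp only [smul_apply, innerSL_apply_apply, smul_eq_mul]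

lemma norm_add_smul_rpow_mul_inner_le {s : ℝ} (hs : 0 ≤ s) (x y : H) {θ : ℝ}
    (hθ : θ ∈ Icc (0 : ℝ) 1) :
    ‖x + θ • y‖ ^ s * inner ℝ (x + θ • y) y ≤
      ‖x‖ ^ s * inner ℝ x y + (1 + s) * (‖x‖ + ‖y‖) ^ s * ‖y‖ ^ 2 * θ := by
  have hxR : ‖x‖ ≤ ‖x‖ + ‖y‖ := le_add_of_nonneg_right (norm_nonneg y)
  have hθy : ‖θ • y‖ ≤ ‖y‖ := by
    rw [norm_smul_of_nonneg hθ.1]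
    exact mul_le_of_le_one_left (norm_nonneg y) hθ.2
  have haR : ‖x + θ • y‖ ≤ ‖x‖ + ‖y‖ := (norm_add_le _ _).trans (by gcongr)
  have hincrement := norm_rpow_smul_sub_rpow_smul_le hs haR hxR
  rw [add_sub_cancel_left, norm_smul_of_nonneg hθ.1] at hincrement
  calc ‖x + θ • y‖ ^ s * inner ℝ (x + θ • y) y
      = ‖x‖ ^ s * inner ℝ x y + inner ℝ (‖x + θ • y‖ ^ s • (x + θ • y) - ‖x‖ ^ s • x) y := by
        rw [inner_sub_left, real_inner_smul_left, real_inner_smul_left, add_sub_cancel]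
    _ ≤ ‖x‖ ^ s * inner ℝ x y + (1 + s) * (‖x‖ + ‖y‖) ^ s * (θ * ‖y‖) * ‖y‖ := by
        gcongr
        exact (real_inner_le_norm _ _).trans (by gcongr)
    _ = ‖x‖ ^ s * inner ℝ x y + (1 + s) * (‖x‖ + ‖y‖) ^ s * ‖y‖ ^ 2 * θ := by ring

end InnerProductSpace

theorem hilbert_power_expansion_bound (H : Type*) [NormedAddCommGroup H]
    [InnerProductSpace ℝ H] (t : ℝ) (ht : 2 ≤ t) (x y : H) :
    ‖x + y‖ ^ t - ‖x‖ ^ t ≤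
      t * ‖x‖ ^ (t - 2) * (inner ℝ x y : ℝ) +
        t * (t - 1) / 2 * (‖x‖ + ‖y‖) ^ (t - 2) * ‖y‖ ^ 2 := by
  have hderiv_le (θ : ℝ) (hθ : θ ∈ Icc (0 : ℝ) 1) :
      t * ‖x + θ • y‖ ^ (t - 2) * inner ℝ (x + θ • y) y ≤
        t * ‖x‖ ^ (t - 2) * inner ℝ x y +
          t * (t - 1) * (‖x‖ + ‖y‖) ^ (t - 2) * ‖y‖ ^ 2 * θ := by
    have := mul_le_mul_of_nonneg_left
      (norm_add_smul_rpow_mul_inner_le (s := t - 2) (by linarith) x y hθ) (by linarith : 0 ≤ t)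
    linear_combination this
  have := sub_le_of_hasDerivAt_le_add_mul
    (fun θ _ ↦ hasDerivAt_norm_add_smul_rpow (by linarith) x y θ) hderiv_le
  simp only [zero_smul, add_zero, one_smul] at this
  linear_combination this
end
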